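/- Let p be a prime and H a p-valenced finite residually thin hypergroup. If F is a strongly normal closed subset of H, then F is p-valenced. -/

import Mathlib

/-- A hypergroup: a set with a hypermultiplication, identity and involution
satisfying (H1), (H2), (H3). -/
structure Hypergroup (H : Type*) where
  hmul : H → H → Set H
  one : H
  star : H → H
  assoc : ∀ p q r : H, (⋃ x ∈ hmul q r, hmul p x) = ⋃ x ∈ hmul p q, hmul x r
  hmul_one : ∀ s : H, hmul s one = {s}
  inv_left : ∀ p q r : H, r ∈ hmul p q → q ∈ hmul (star p) r
  inv_right : ∀ p q r : H, r ∈ hmul p q → p ∈ hmul r (star q)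

namespace Hypergroup

variable {H : Type*} (G : Hypergroup H)

/-- Complex (set) product: `AB = ⋃_{a ∈ A, b ∈ B} ab`. -/
def smul (A B : Set H) : Set H := ⋃ a ∈ A, ⋃ b ∈ B, G.hmul a b

/-- `A* = { a* | a ∈ A }`. -/
def sstar (A : Set H) : Set H := G.star '' A

/-- A nonempty subset `F` is closed if `F*F ⊆ F`. -/
def IsClosed (F : Set H) : Prop := F.Nonempty ∧ G.smul (G.sstar F) F ⊆ F

/-- `F` is normal in `K`: `Fk ⊆ kF` for all `k ∈ K`. -/
def IsNormalIn (F K : Set H) : Prop := ∀ k ∈ K, G.smul F {k} ⊆ G.smul {k} F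

/-- `F` is strongly normal in `K`: `k*Fk ⊆ F` for all `k ∈ K`. -/
def IsStronglyNormalIn (F K : Set H) : Prop :=
  ∀ k ∈ K, G.smul (G.smul {G.star k} F) {k} ⊆ F

/-- An element `s` is thin if `s*s = {1}`. -/
def IsThinElem (s : H) : Prop := G.hmul (G.star s) s = {G.one}

/-- A hypergroup is thin if all elements are thin. -/
def IsThin : Prop := ∀ s : H, G.IsThinElem s

/-- The center `Z(H) = {h | hx = xh for all x, h*h = {1}}`. -/
def center : Set H :=
  {h | (∀ x : H, G.hmul h x = G.hmul x h) ∧ G.hmul (G.star h) h = {G.one}}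

/-- The class `h^F := FhF`. -/
def cls (F : Set H) (h : H) : Set H := G.smul (G.smul F {h}) F

/-- The quotient set `H//F := { h^F | h ∈ H }`. -/
def quotSet (F : Set H) : Set (Set H) := Set.range (G.cls F)

/-- The class `h^F` as an element of `H//F`. -/
def qcls (F : Set H) (h : H) : G.quotSet F := ⟨G.cls F h, h, rfl⟩

/-- The full preimage in `H` of the center of the quotient `H//T`:
`{h | h^T ∈ Z(H//T)}`, i.e. `h^T` commutes with all classes `y^T` and
`(h^T)*(h^T) = {1^T} = {T}`. -/
def qCenterPre (T : Set H) : Set H :=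
  {h | (∀ y : H, G.cls T '' (G.smul (G.smul {h} T) {y}) =
          G.cls T '' (G.smul (G.smul {y} T) {h})) ∧
       G.cls T '' (G.smul (G.smul {G.star h} T) {h}) = {T}}

/-- The upper central series: `Z₀(H) = {1}`, and `Zᵢ₊₁(H)` is the full preimage
of `Z(H//Zᵢ(H))`, i.e. `Zᵢ₊₁(H)//Zᵢ(H) = Z(H//Zᵢ(H))`. -/
def upperCentral : ℕ → Set H
  | 0 => {G.one}
  | n + 1 => G.qCenterPre (upperCentral n)

/-- A hypergroup is weakly nilpotent if `Zₙ(H) = H` for some `n`. -/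
def WeaklyNilpotent : Prop := ∃ n : ℕ, G.upperCentral n = Set.univ

/-- `F` is subnormal in `K` via a chain of successively normal closed subsets. -/
def IsSubnormalIn (F K : Set H) : Prop :=
  ∃ n : ℕ, ∃ C : ℕ → Set H, C 0 = F ∧ C n = K ∧
    ∀ i < n, C i ⊆ C (i + 1) ∧ G.IsClosed (C (i + 1)) ∧ G.IsNormalIn (C i) (C (i + 1))

/-- The quotient `K//N` is thin: `(k^N)*(k^N) = {1^N}` for all `k ∈ K`. -/
def QuotThin (N K : Set H) : Prop :=
  ∀ k ∈ K, G.cls N '' (G.smul (G.smul {G.star k} N) {k}) = {N}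

/-- A residually-thin chain from `{1}` to `K`. -/
def RTChainOn (K : Set H) (n : ℕ) (C : ℕ → Set H) : Prop :=
  C 0 = {G.one} ∧ C n = K ∧
    ∀ i < n, C i ⊆ C (i + 1) ∧ G.IsClosed (C (i + 1)) ∧ G.QuotThin (C i) (C (i + 1))

/-- The valency `n_K = ∏ |Cᵢ₊₁//Cᵢ|` computed along some RT chain for `K`. -/
def HasValencyOn (K : Set H) (m : ℕ) : Prop :=
  ∃ n C, G.RTChainOn K n C ∧
    m = ∏ i ∈ Finset.range n, Nat.card (G.cls (C i) '' C (i + 1))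

/-- A closed `p`-subset: a closed subset whose valency is a power of `p`. -/
def PSubsetOn (p : ℕ) (K : Set H) : Prop :=
  G.IsClosed K ∧ ∃ m k : ℕ, G.HasValencyOn K m ∧ m = p ^ k

/-- `h` is `p`-valenced in `K`: for every subnormal closed `p`-subset `U` of `K`
such that `(h*)^U h^U` consists of thin elements of the quotient,
`n_{(h*)^U h^U} = |(h*)^U h^U|` is a power of `p`. -/
def PValencedElemOn (p : ℕ) (K : Set H) (h : H) : Prop :=
  ∀ U : Set H, G.IsClosed U → U ⊆ K → G.IsSubnormalIn U K → G.PSubsetOn p U →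
    (∀ x ∈ G.smul (G.smul {G.star h} U) {h},
      G.cls U '' (G.smul (G.smul {G.star x} U) {x}) = {U}) →
    ∃ k : ℕ, Nat.card (G.cls U '' (G.smul (G.smul {G.star h} U) {h})) = p ^ k

/-- `K` is `p`-valenced if all its elements are. -/
def PValencedOn (p : ℕ) (K : Set H) : Prop := ∀ h ∈ K, G.PValencedElemOn p K h

end Hypergroup

/-! Strong normality gives normality: for `x ∈ fh` with `f ∈ F`, any `y ∈ h*x` lies in
`h*Fh ⊆ F` and satisfies `x ∈ hy`. Hence a subnormal chain from `U` to `F` extends by one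
step to a subnormal chain from `U` to `H`, and the `p`-valence condition on `h` relative
to `U` is then the one already granted in `H`. -/

namespace Hypergroup

variable {H : Type*} (G : Hypergroup H)

lemma mem_hmul_one (s : H) : s ∈ G.hmul s G.one := by
  rw [G.hmul_one]; rfl

lemma one_mem_star_hmul (s : H) : G.one ∈ G.hmul (G.star s) s :=
  G.inv_left s G.one s (G.mem_hmul_one s)

lemma star_star (s : H) : G.star (G.star s) = s := by
  have h := G.inv_left _ _ _ (G.one_mem_star_hmul s)
  rwa [G.hmul_one, Set.mem_singleton_iff, eq_comm] at h

lemma hmul_nonempty (a b : H) : (G.hmul a b).Nonempty := by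
  have hb : G.one ∈ G.hmul b (G.star b) := by
    simpa only [G.star_star] using G.one_mem_star_hmul (G.star b)
  have ha : a ∈ ⋃ x ∈ G.hmul b (G.star b), G.hmul a x :=
    Set.mem_biUnion hb (G.mem_hmul_one a)
  rw [G.assoc] at ha
  obtain ⟨x, hx, -⟩ := Set.mem_iUnion₂.1 ha
  exact ⟨x, hx⟩

lemma mem_smul_singleton {A : Set H} {b x : H} :
    x ∈ G.smul A {b} ↔ ∃ a ∈ A, x ∈ G.hmul a b := by
  simp [smul]

lemma mem_singleton_smul {a x : H} {B : Set H} :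
    x ∈ G.smul {a} B ↔ ∃ b ∈ B, x ∈ G.hmul a b := by
  simp [smul]

lemma isClosed_univ : G.IsClosed Set.univ :=
  ⟨⟨G.one, trivial⟩, Set.subset_univ _⟩

variable {G}

lemma IsStronglyNormalIn.isNormalIn {F K : Set H} (hsn : G.IsStronglyNormalIn F K) :
    G.IsNormalIn F K := by
  intro k hk x hx
  obtain ⟨f, hf, hx⟩ := G.mem_smul_singleton.1 hx
  obtain ⟨y, hy⟩ := G.hmul_nonempty (G.star k) x
  have hyF : y ∈ F := by
    have hy' : y ∈ ⋃ z ∈ G.hmul f k, G.hmul (G.star k) z := Set.mem_biUnion hx hy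
    rw [G.assoc] at hy'
    obtain ⟨z, hz, hyz⟩ := Set.mem_iUnion₂.1 hy'
    exact hsn k hk <| G.mem_smul_singleton.2 ⟨z, G.mem_singleton_smul.2 ⟨f, hf, hz⟩, hyz⟩
  have hxy : x ∈ G.hmul k y := by
    simpa only [G.star_star] using G.inv_left _ _ _ hy
  exact G.mem_singleton_smul.2 ⟨y, hyF, hxy⟩

lemma IsSubnormalIn.trans_isNormalIn {U F K : Set H} (hU : G.IsSubnormalIn U F)
    (hFK : F ⊆ K) (hK : G.IsClosed K) (hF : G.IsNormalIn F K) : G.IsSubnormalIn U K := by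
  obtain ⟨n, C, hC0, hCn, hC⟩ := hU
  refine ⟨n + 1, fun i => if i ≤ n then C i else K, by simp [hC0], by simp, fun i hi => ?_⟩
  rcases Nat.lt_succ_iff_lt_or_eq.1 hi with hi | rfl
  · simpa only [if_pos hi.le, if_pos (Nat.succ_le_of_lt hi)] using hC i hi
  · simpa only [le_refl, if_true, Nat.not_succ_le_self, if_false, hCn] using ⟨hFK, hK, hF⟩

lemma PValencedOn.of_isNormalIn {p : ℕ} {F K : Set H} (hpv : G.PValencedOn p K)
    (hFK : F ⊆ K) (hK : G.IsClosed K) (hF : G.IsNormalIn F K) : G.PValencedOn p F :=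
  fun h hh U hU hUF hUsn hUp hthin =>
    hpv h (hFK hh) U hU (hUF.trans hFK) (hUsn.trans_isNormalIn hFK hK hF) hUp hthin

end Hypergroup

theorem stronglyNormal_pValenced_general {H : Type*} (G : Hypergroup H)
    (p : ℕ)
    (hpv : G.PValencedOn p Set.univ)
    (F : Set H)
    (hsn : G.IsStronglyNormalIn F Set.univ) :
    G.PValencedOn p F :=
  hpv.of_isNormalIn (Set.subset_univ F) G.isClosed_univ hsn.isNormalIn

/-- let `p` be a prime and `H` a `p`-valenced finite residually
thin hypergroup.  If `F` is a strongly normal closed subset of `H`, then `F`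
is `p`-valenced. -/
theorem stronglyNormal_pValenced {H : Type*} [Finite H] (G : Hypergroup H)
    (p : ℕ) (hp : p.Prime)
    (hRT : ∃ n C, G.RTChainOn Set.univ n C)
    (hpv : G.PValencedOn p Set.univ)
    (F : Set H) (hF : G.IsClosed F)
    (hsn : G.IsStronglyNormalIn F Set.univ) :
    G.PValencedOn p F :=
  stronglyNormal_pValenced_general G p hpv F hsn
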